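/- Fix integers n, m ≥ 1. Let F ⊆ {1,…,n+m} be an n-element subset with minimum element i_1, let k ≥ 1 be such that [i_1, i_1+k−1] ⊆ F and i_1+k ∉ F, set F' = F \ [i_1, i_1+k−1], and assume i_1 + k ≤ n+m. If the vertex B(F) is one of the two vertices of D_l(T) for some l and some T ∈ X_l, then l ≥ k and D_l(T) ⪯ D_k({i_1+k} ∪ F') in the total order ≻. -/
import Mathlib


noncomputable section
attribute [local instance] Classical.propDecidable

/-- The four symbols `A`, `B`, `C`, `D` labelling the vertices of the colored graph
`Λ(n,m)`: a vertex of `Λ(n,m)` is a pair `(X, S)` (written `X(S)` in the paper) of a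
symbol `X ∈ {A,B,C,D}` and an `n`-element subset `S ⊆ {1,…,n+m}`. -/
inductive Lbl | A | B | C | D
deriving DecidableEq

/-- `S ∈ X_j`, i.e. `S ⊆ {j+1,…,n+m}` and `#S = n+1-j`, for `1 ≤ j ≤ n`. -/
def inXj (n m j : ℕ) (S : Finset ℕ) : Prop :=
  1 ≤ j ∧ j ≤ n ∧ S ⊆ Finset.Icc (j+1) (n+m) ∧ S.card = n + 1 - j

/-- `S ∈ X = X_1 ∪ ⋯ ∪ X_n`. -/
def inX (n m : ℕ) (S : Finset ℕ) : Prop := ∃ j, inXj n m j S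

/-- For `S = {i_1 < ⋯ < i_{n+1-j}} ∈ X_j` (where `j = n+1-#S`) and `S' = S \ {i_1}`,
the pair `D(S) = D_j(S)` of vertices of `Λ(n,m)`:
`{A([j-1] ∪ S), A([j] ∪ S')}` if `j` is odd and `i_1 = j+1`;
`{A([j-1] ∪ S), B([i_1-j-1, i_1-2] ∪ S')}` if `j` is odd and `i_1 > j+1`;
`{B([i_1-j, i_1-2] ∪ S), B([i_1-j, i_1-1] ∪ S')}` if `j` is even. -/
def DS (n m : ℕ) (S : Finset ℕ) : (Lbl × Finset ℕ) × (Lbl × Finset ℕ) :=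
  let j := n + 1 - S.card
  let i1 := if h : S.Nonempty then S.min' h else 0
  let S' := S.erase i1
  if Odd j then
    if i1 = j + 1 then
      ((Lbl.A, Finset.Icc 1 (j-1) ∪ S), (Lbl.A, Finset.Icc 1 j ∪ S'))
    else
      ((Lbl.A, Finset.Icc 1 (j-1) ∪ S), (Lbl.B, Finset.Icc (i1-j-1) (i1-2) ∪ S'))
  else
    ((Lbl.B, Finset.Icc (i1-j) (i1-2) ∪ S), (Lbl.B, Finset.Icc (i1-j) (i1-1) ∪ S'))

/-- `S >_rlex S'` : the largest element of the symmetric difference of `S` and `S'`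
lies in `S'`. -/
def rlexGT (S S' : Finset ℕ) : Prop :=
  ∃ a ∈ S' \ S, ∀ b ∈ (S \ S') ∪ (S' \ S), b ≤ a

/-- `D_j(S) ≻ D_{j'}(S')` in the total order on `{D(S) : S ∈ X}`:
either `j < j'`, or `j = j'` and `S >_rlex S'`. -/
def DGT (j : ℕ) (S : Finset ℕ) (j' : ℕ) (S' : Finset ℕ) : Prop :=
  j < j' ∨ (j = j' ∧ rlexGT S S')

/-- Let `F ⊆ {1,…,n+m}` be an `n`-subset with minimum `i_1`, let `k ≥ 1` with
`[i_1, i_1+k-1] ⊆ F`, `i_1+k ∉ F` and `i_1+k ≤ n+m`, and set `F' = F \ [i_1, i_1+k-1]`.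
If `B(F)` is one of the two vertices of `D_l(T)` with `T ∈ X_l`, then `l ≥ k` and
`D_l(T) ⪯ D_k({i_1+k} ∪ F')`. -/
theorem stmt13 (n m : ℕ) (hn : 1 ≤ n) (hm : 1 ≤ m)
    (F : Finset ℕ) (hF : F ⊆ Finset.Icc 1 (n+m)) (hcard : F.card = n)
    (i1 : ℕ) (hi1 : i1 ∈ F) (hmin : ∀ a ∈ F, i1 ≤ a)
    (k : ℕ) (hk : 1 ≤ k)
    (hicc : Finset.Icc i1 (i1 + k - 1) ⊆ F) (hout : i1 + k ∉ F) (hle : i1 + k ≤ n + m)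
    (l : ℕ) (T : Finset ℕ) (hT : inXj n m l T)
    (hB : (Lbl.B, F) = (DS n m T).1 ∨ (Lbl.B, F) = (DS n m T).2) :
    k ≤ l ∧
      ((l = k ∧ T = insert (i1 + k) (F \ Finset.Icc i1 (i1 + k - 1))) ∨
        DGT k (insert (i1 + k) (F \ Finset.Icc i1 (i1 + k - 1))) l T) := by
  obtain ⟨hl1, hln, hTsub, hTcard⟩ := hT
  have hTne : T.Nonempty := Finset.card_pos.mp (by omega)
  have htT : T.min' hTne ∈ T := T.min'_mem hTne
  set t := T.min' hTne with ht
  have htl : l + 1 ≤ t := (Finset.mem_Icc.mp (hTsub htT)).1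
  have hminT : ∀ a ∈ T, t ≤ a := fun a ha => T.min'_le a ha
  have hT'mem : ∀ a ∈ T.erase t, t + 1 ≤ a := by
    intro a ha
    rw [Finset.mem_erase] at ha
    have := hminT a ha.2
    omega
  have hj : n + 1 - T.card = l := by omega
  rw [DS] at hB
  simp only [hj, dif_pos hTne, ← ht] at hB
  by_cases hodd : Odd l
  · rw [if_pos hodd] at hB
    by_cases htl1 : t = l + 1
    · rw [if_pos htl1] at hB
      simp at hB
    · rw [if_neg htl1] at hB
      simp only [Prod.mk.injEq] at hB
      rcases hB with ⟨hBA, _⟩ | ⟨_, hFeq⟩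
      · exact Lbl.noConfusion hBA
      -- subcase 1 : l odd, t > l+1, F = Icc (t-l-1) (t-2) ∪ T.erase t
      have hi1eq : i1 = t - l - 1 := by
        have h1 : t - l - 1 ∈ F := by
          rw [hFeq]
          exact Finset.mem_union_left _ (by rw [Finset.mem_Icc]; omega)
        have h2 := hmin _ h1
        have h3 : t - l - 1 ≤ i1 := by
          have h4 := hi1
          rw [hFeq, Finset.mem_union] at h4
          rcases h4 with h | h
          · rw [Finset.mem_Icc] at h; omega
          · have := hT'mem _ h; omega
        omega
      have hkeq : k = l := by
        rcases lt_trichotomy k l with h | h | h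
        · exfalso; apply hout
          rw [hFeq]
          exact Finset.mem_union_left _ (by rw [Finset.mem_Icc]; omega)
        · exact h
        · exfalso
          have h5 : t - 1 ∈ F := hicc (by rw [Finset.mem_Icc]; omega)
          rw [hFeq, Finset.mem_union] at h5
          rcases h5 with h5 | h5
          · rw [Finset.mem_Icc] at h5; omega
          · have := hT'mem _ h5; omega
      have hsd : F \ Finset.Icc i1 (i1 + k - 1) = T.erase t := by
        ext a
        simp only [hFeq, Finset.mem_sdiff, Finset.mem_union, Finset.mem_Icc]
        constructor
        · rintro ⟨h1 | h1, h2⟩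
          · exact absurd (by omega) h2
          · exact h1
        · intro h1
          have := hT'mem a h1
          exact ⟨Or.inr h1, by omega⟩
      have hik : i1 + k = t - 1 := by omega
      refine ⟨le_of_eq hkeq, Or.inr (Or.inr ⟨hkeq, ?_⟩)⟩
      rw [hsd, hik]
      refine ⟨t, ?_, ?_⟩
      · rw [Finset.mem_sdiff]
        refine ⟨htT, ?_⟩
        rw [Finset.mem_insert]
        push_neg
        exact ⟨by omega, fun h => (Finset.mem_erase.mp h).1 rfl⟩
      · intro b hb
        rw [Finset.mem_union, Finset.mem_sdiff, Finset.mem_sdiff] at hb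
        rcases hb with ⟨h1, h2⟩ | ⟨h1, h2⟩
        · rcases Finset.mem_insert.mp h1 with h | h
          · omega
          · exact absurd (Finset.mem_erase.mp h).2 h2
        · by_cases hbt : b = t
          · omega
          · exfalso
            exact h2 (Finset.mem_insert.mpr (Or.inr (Finset.mem_erase.mpr ⟨hbt, h1⟩)))
  · -- l even
    rw [if_neg hodd] at hB
    have hl2 : 2 ≤ l := by
      rcases Nat.not_odd_iff_even.mp hodd with ⟨c, hc⟩
      omega
    simp only [Prod.mk.injEq] at hB
    rcases hB with ⟨_, hFeq⟩ | ⟨_, hFeq⟩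
    · -- subcase 2 : F = Icc (t-l) (t-2) ∪ T
      have hi1eq : i1 = t - l := by
        have h1 : t - l ∈ F := by
          rw [hFeq]
          exact Finset.mem_union_left _ (by rw [Finset.mem_Icc]; omega)
        have h2 := hmin _ h1
        have h3 : t - l ≤ i1 := by
          have h4 := hi1
          rw [hFeq, Finset.mem_union] at h4
          rcases h4 with h | h
          · rw [Finset.mem_Icc] at h; omega
          · have := hminT _ h; omega
        omega
      have hkeq : k = l - 1 := by
        rcases lt_trichotomy k (l - 1) with h | h | h
        · exfalso; apply hout
          rw [hFeq]
          exact Finset.mem_union_left _ (by rw [Finset.mem_Icc]; omega)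
        · exact h
        · exfalso
          have h5 : t - 1 ∈ F := hicc (by rw [Finset.mem_Icc]; omega)
          rw [hFeq, Finset.mem_union] at h5
          rcases h5 with h5 | h5
          · rw [Finset.mem_Icc] at h5; omega
          · have := hminT _ h5; omega
      exact ⟨by omega, Or.inr (Or.inl (by omega))⟩
    · -- subcase 3 : F = Icc (t-l) (t-1) ∪ T.erase t
      have hi1eq : i1 = t - l := by
        have h1 : t - l ∈ F := by
          rw [hFeq]
          exact Finset.mem_union_left _ (by rw [Finset.mem_Icc]; omega)
        have h2 := hmin _ h1
        have h3 : t - l ≤ i1 := by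
          have h4 := hi1
          rw [hFeq, Finset.mem_union] at h4
          rcases h4 with h | h
          · rw [Finset.mem_Icc] at h; omega
          · have := hT'mem _ h; omega
        omega
      have hkeq : k = l := by
        rcases lt_trichotomy k l with h | h | h
        · exfalso; apply hout
          rw [hFeq]
          exact Finset.mem_union_left _ (by rw [Finset.mem_Icc]; omega)
        · exact h
        · exfalso
          have h5 : t ∈ F := hicc (by rw [Finset.mem_Icc]; omega)
          rw [hFeq, Finset.mem_union] at h5
          rcases h5 with h5 | h5
          · rw [Finset.mem_Icc] at h5; omega
          · have := hT'mem _ h5; omega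
      have hsd : F \ Finset.Icc i1 (i1 + k - 1) = T.erase t := by
        ext a
        simp only [hFeq, Finset.mem_sdiff, Finset.mem_union, Finset.mem_Icc]
        constructor
        · rintro ⟨h1 | h1, h2⟩
          · exact absurd (by omega) h2
          · exact h1
        · intro h1
          have := hT'mem a h1
          exact ⟨Or.inr h1, by omega⟩
      have hik : i1 + k = t := by omega
      refine ⟨le_of_eq hkeq, Or.inl ⟨hkeq.symm, ?_⟩⟩
      rw [hsd, hik, Finset.insert_erase htT]
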